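/- Let h₁, k₁, h₂, k₂ ∈ ℝ with h₂ ≠ k₁, let M be the 2×2 real matrix with rows (h₁, k₁) and (h₂, k₂), and for φ ∈ L²([0,1]; ℝ²) define B(φ) = ∫_0^1 φ(t) · (M ∫_0^t φ(s) ds) dt. Consider the orthonormal basis {ξ} of L²([0,1]; ℝ²) given by the constant functions (1,0), (0,1) together with, for each integer n ≥ 1, the four functions (cos(2πnt), sin(2πnt)), (sin(2πnt), cos(2πnt)), (−cos(2πnt), sin(2πnt)), (−sin(2πnt), cos(2πnt)) (each normalized in L²). Then the family (B(ξ))_{ξ in this basis} is not absolutely summable: the series Σ_ξ |B(ξ)| diverges. Hence the series Σ_ξ B(ξ) does not converge unconditionally and its value depends on the order of the terms. -/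

import Mathlib

/-!
On the basis element `φ(t) = (cos 2πmt, sin 2πmt)` one has `∫_0^t φ = (sin 2πmt, 1 - cos 2πmt)/(2πm)`,
and after linearising the products the integrand of `B(φ)` becomes `(h₂ - k₁)/(4πm)` plus
pure harmonics of frequency `2πm` and `4πm`, which integrate to zero over `[0, 1]`.
Hence `B(φ) = (h₂ - k₁)/(4πm)`, and since `h₂ ≠ k₁` these terms alone already form a
multiple of the harmonic series.
-/

open MeasureTheory Real Matrix intervalIntegral

theorem eval_intervalIntegral {ι : Type*} [Fintype ι] {f : ℝ → ι → ℝ} {a b : ℝ} {μ : Measure ℝ}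
    (hf : IntervalIntegrable f μ a b) (i : ι) :
    (∫ s in a..b, f s ∂μ) i = ∫ s in a..b, f s i ∂μ :=
  ((ContinuousLinearMap.proj (R := ℝ) (φ := fun _ : ι => ℝ) i).intervalIntegral_comp_comm hf).symm

theorem integral_vec_cos_sin_mul {ω : ℝ} (hω : ω ≠ 0) (t : ℝ) :
    ∫ s in (0:ℝ)..t, ![cos (ω * s), sin (ω * s)] = ![sin (ω * t) / ω, (1 - cos (ω * t)) / ω] := by
  have hint : IntervalIntegrable (fun s => ![cos (ω * s), sin (ω * s)]) volume 0 t :=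
    (continuous_pi fun i => by fin_cases i <;> simp <;> fun_prop).intervalIntegrable _ _
  ext i
  fin_cases i <;> simp [eval_intervalIntegral hint, integral_comp_mul_left, hω] <;> field_simp

theorem integral_cos_two_pi_int_mul {m : ℤ} (hm : m ≠ 0) :
    ∫ t in (0:ℝ)..1, cos (2 * π * m * t) = 0 := by
  have hsin : sin (2 * π * m) = 0 := by
    rw [show 2 * π * m = ((2 * m : ℤ) : ℝ) * π by push_cast; ring, sin_int_mul_pi]
  simp [integral_comp_mul_left, hm, pi_ne_zero, hsin]

theorem integral_sin_two_pi_int_mul {m : ℤ} (hm : m ≠ 0) :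
    ∫ t in (0:ℝ)..1, sin (2 * π * m * t) = 0 := by
  have hcos : cos (2 * π * m) = 1 := by
    rw [show 2 * π * m = m * (2 * π) by ring, cos_int_mul_two_pi]
  simp [integral_comp_mul_left, hm, pi_ne_zero, hcos]

theorem vec_cos_sin_dotProduct_mulVec (M : Matrix (Fin 2) (Fin 2) ℝ) (ω x : ℝ) :
    ![cos x, sin x] ⬝ᵥ M *ᵥ ![sin x / ω, (1 - cos x) / ω] =
      ω⁻¹ * ((M 1 0 - M 0 1) / 2 + M 0 1 * cos x + M 1 1 * sin x
        + (M 0 0 - M 1 1) / 2 * sin (2 * x) - (M 0 1 + M 1 0) / 2 * cos (2 * x)) := by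
  simp only [dotProduct, mulVec, Fin.sum_univ_two, sin_two_mul, cos_two_mul, cons_val_zero,
    cons_val_one]
  linear_combination ω⁻¹ * M 1 0 * sin_sq_add_cos_sq x

theorem integral_vec_cos_sin_dotProduct_mulVec_integral (M : Matrix (Fin 2) (Fin 2) ℝ) {m : ℤ}
    (hm : m ≠ 0) :
    ∫ t in (0:ℝ)..1, ![cos (2 * π * m * t), sin (2 * π * m * t)] ⬝ᵥ
      M *ᵥ ∫ s in (0:ℝ)..t, ![cos (2 * π * m * s), sin (2 * π * m * s)] =
      (M 1 0 - M 0 1) / (4 * π * m) := by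
  have hω : 2 * π * m ≠ 0 := by simp [hm, pi_ne_zero]
  have hdouble (t : ℝ) : 2 * (2 * π * m * t) = 2 * π * ((2 * m : ℤ) : ℝ) * t := by push_cast; ring
  have h2m : 2 * m ≠ 0 := by omega
  simp only [integral_vec_cos_sin_mul hω, vec_cos_sin_dotProduct_mulVec, hdouble]
  rw [intervalIntegral.integral_const_mul]
  simp (disch := exact Continuous.intervalIntegrable (by fun_prop) _ _) only
    [intervalIntegral.integral_add, intervalIntegral.integral_sub,
      intervalIntegral.integral_const_mul, intervalIntegral.integral_const,
      integral_cos_two_pi_int_mul hm, integral_sin_two_pi_int_mul hm,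
      integral_cos_two_pi_int_mul h2m, integral_sin_two_pi_int_mul h2m]
  field_simp
  ring

theorem not_summable_div_nat_add_one {c : ℝ} (hc : c ≠ 0) :
    ¬ Summable (fun n : ℕ => c / ((n : ℝ) + 1)) := by
  intro h
  have h' : Summable (fun n : ℕ => 1 / ((n + 1 : ℕ) : ℝ)) :=
    (h.mul_left c⁻¹).congr fun n => by push_cast; field_simp
  exact Real.not_summable_one_div_natCast ((summable_nat_add_iff 1).mp h')

theorem statement10_general (h₁ k₁ h₂ k₂ : ℝ) (hcurl : h₂ ≠ k₁)
    (M : Matrix (Fin 2) (Fin 2) ℝ) (hM : M = !![h₁, k₁; h₂, k₂])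
    (B : (ℝ → Fin 2 → ℝ) → ℝ)
    (hB : ∀ φ : ℝ → Fin 2 → ℝ,
      B φ = ∫ t in (0:ℝ)..1, φ t ⬝ᵥ M.mulVec (∫ s in (0:ℝ)..t, φ s))
    (ξ : (Fin 2 ⊕ ℕ × Fin 4) → ℝ → Fin 2 → ℝ)
    (hξa : ∀ n : ℕ, ξ (Sum.inr (n, 0)) = fun t =>
      ![Real.cos (2 * π * ((n : ℝ) + 1) * t), Real.sin (2 * π * ((n : ℝ) + 1) * t)]) :
    ¬ Summable (fun i => |B (ξ i)|) ∧ ¬ Summable (fun i => B (ξ i)) := by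
  have hBξ (n : ℕ) : B (ξ (Sum.inr (n, 0))) = (h₂ - k₁) / (4 * π) / ((n : ℝ) + 1) := by
    have hn : (n : ℝ) + 1 = ((n + 1 : ℤ) : ℝ) := by push_cast; ring
    rw [hB, hξa, hn, integral_vec_cos_sin_dotProduct_mulVec_integral M (by omega), hM]
    simp [div_div]
  have hnot : ¬ Summable (fun i => B (ξ i)) := fun h => by
    have hsub := h.comp_injective (i := fun n : ℕ => Sum.inr (n, 0)) fun a b hab => by
      simpa using hab
    exact not_summable_div_nat_add_one (by simp [sub_eq_zero, hcurl, pi_ne_zero])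
      (hsub.congr hBξ)
  exact ⟨fun h => hnot (summable_abs_iff.mp h), hnot⟩

/-- With `M = !![h₁, k₁; h₂, k₂]`, `h₂ ≠ k₁`, and
`B(φ) = ∫_0^1 φ(t) · (M ∫_0^t φ(s) ds) dt`, consider the orthonormal basis `{ξ}` of
`L²([0,1]; ℝ²)` given by the constants `(1,0)`, `(0,1)` together with, for each `n ≥ 1`,
`(cos 2πnt, sin 2πnt)`, `(sin 2πnt, cos 2πnt)`, `(−cos 2πnt, sin 2πnt)`,
`(−sin 2πnt, cos 2πnt)`. Then the family `(B(ξ))` is not absolutely summable, hence the series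
`Σ_ξ B(ξ)` does not converge unconditionally (its value depends on the order of the terms). -/
theorem statement10 (h₁ k₁ h₂ k₂ : ℝ) (hcurl : h₂ ≠ k₁)
    (M : Matrix (Fin 2) (Fin 2) ℝ) (hM : M = !![h₁, k₁; h₂, k₂])
    (B : (ℝ → Fin 2 → ℝ) → ℝ)
    (hB : ∀ φ : ℝ → Fin 2 → ℝ,
      B φ = ∫ t in (0:ℝ)..1, φ t ⬝ᵥ M.mulVec (∫ s in (0:ℝ)..t, φ s))
    (ξ : (Fin 2 ⊕ ℕ × Fin 4) → ℝ → Fin 2 → ℝ)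
    (hξ0 : ξ (Sum.inl 0) = fun _ => ![1, 0])
    (hξ1 : ξ (Sum.inl 1) = fun _ => ![0, 1])
    (hξa : ∀ n : ℕ, ξ (Sum.inr (n, 0)) = fun t =>
      ![Real.cos (2 * π * ((n : ℝ) + 1) * t), Real.sin (2 * π * ((n : ℝ) + 1) * t)])
    (hξb : ∀ n : ℕ, ξ (Sum.inr (n, 1)) = fun t =>
      ![Real.sin (2 * π * ((n : ℝ) + 1) * t), Real.cos (2 * π * ((n : ℝ) + 1) * t)])
    (hξc : ∀ n : ℕ, ξ (Sum.inr (n, 2)) = fun t =>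
      ![-Real.cos (2 * π * ((n : ℝ) + 1) * t), Real.sin (2 * π * ((n : ℝ) + 1) * t)])
    (hξd : ∀ n : ℕ, ξ (Sum.inr (n, 3)) = fun t =>
      ![-Real.sin (2 * π * ((n : ℝ) + 1) * t), Real.cos (2 * π * ((n : ℝ) + 1) * t)]) :
    ¬ Summable (fun i => |B (ξ i)|) ∧ ¬ Summable (fun i => B (ξ i)) :=
  statement10_general h₁ k₁ h₂ k₂ hcurl M hM B hB ξ hξa
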